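/- arXiv:1811.00456 — 2 statements merged into one kernel-verified Lean document; each statement's English description precedes it below -/
import Mathlib

section
/- If 2 ≤ k ≤ N, then in the free associative ℂ-algebra ℂ⟨x_1,…,x_N⟩ the elementary symmetric polynomial e_k = ∑_{1 ≤ i(1) < i(2) < ⋯ < i(k) ≤ N} x_{i(1)} x_{i(2)} ⋯ x_{i(k)} does not belong to the subalgebra generated by the power sum symmetric polynomials {p_j : j ≥ 1}. -/
/-!
Swapping `x_1` and `x_2` extends to an algebra automorphism `τ` of `ℂ⟨x_1,…,x_N⟩` that permutes
the summands of each power sum, so `τ` fixes the subalgebra they generate. But `τ e_k` is the sum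
of the words `x_{τ i(1)} ⋯ x_{τ i(k)}` over increasing `i`, and `x_1 x_2 ⋯ x_k`, a word of `e_k`,
is not among them (it would need `i(1) = 2 > 1 = i(2)`). Distinct words being linearly
independent, `τ e_k ≠ e_k`.
-/

open scoped BigOperators

/-- The power sum symmetric polynomial `p_j = ∑_{i=1}^N x_i^j` in the free
associative `ℂ`-algebra on `N` noncommuting generators. -/
noncomputable def powerSum (N : ℕ) (j : ℕ) : FreeAlgebra ℂ (Fin N) :=
  ∑ i : Fin N, FreeAlgebra.ι ℂ i ^ j

/-- The elementary symmetric polynomial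
`e_k = ∑_{1 ≤ i(1) < … < i(k) ≤ N} x_{i(1)} ⋯ x_{i(k)}` in `ℂ⟨x_1,…,x_N⟩`. -/
noncomputable def elemSym (N k : ℕ) : FreeAlgebra ℂ (Fin N) :=
  ∑ i ∈ Finset.univ.filter (fun i : Fin k → Fin N => ∀ a b : Fin k, a < b → i a < i b),
    (List.ofFn fun j : Fin k => FreeAlgebra.ι ℂ (i j)).prod

namespace FreeAlgebra

variable {R X Y : Type*} [CommSemiring R]

theorem equivMonoidAlgebraFreeMonoid_list_prod_map_ι (l : List X) :
    equivMonoidAlgebraFreeMonoid (l.map (ι R)).prod =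
      MonoidAlgebra.single (FreeMonoid.ofList l) (1 : R) := by
  induction l with
  | nil => simp [MonoidAlgebra.one_def]
  | cons x l ih =>
    have hx : equivMonoidAlgebraFreeMonoid (ι R x) = MonoidAlgebra.single (FreeMonoid.of x) 1 := by
      simp [equivMonoidAlgebraFreeMonoid]
    rw [List.map_cons, List.prod_cons, map_mul, ih, hx, MonoidAlgebra.single_mul_single, one_mul,
      FreeMonoid.ofList_cons]

theorem coeff_equivMonoidAlgebraFreeMonoid_sum_prod_ofFn [DecidableEq X] {k : ℕ}
    (S : Finset (Fin k → X)) (i : Fin k → X) :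
    (equivMonoidAlgebraFreeMonoid (∑ c ∈ S, (List.ofFn fun j => ι R (c j)).prod)).coeff
      (FreeMonoid.ofList (List.ofFn i)) = if i ∈ S then 1 else 0 := by
  have hword (c : Fin k → X) : (List.ofFn fun j => ι R (c j)) = (List.ofFn c).map (ι R) :=
    (List.map_ofFn ..).symm
  simp only [hword, map_sum, equivMonoidAlgebraFreeMonoid_list_prod_map_ι,
    MonoidAlgebra.coeff_sum, MonoidAlgebra.coeff_single, Finsupp.finsetSum_apply]
  have hcoeff (c : Fin k → X) : (Finsupp.single (FreeMonoid.ofList (List.ofFn c)) (1 : R))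
      (FreeMonoid.ofList (List.ofFn i)) = if i = c then 1 else 0 := by
    split_ifs with h
    · rw [h, Finsupp.single_eq_same]
    · exact Finsupp.single_eq_of_ne fun h' =>
        h (List.ofFn_injective (FreeMonoid.ofList.injective h'))
  simp only [hcoeff, Finset.sum_ite_eq]

theorem sum_prod_ofFn_ι_injective [Nontrivial R] {k : ℕ} :
    Function.Injective fun S : Finset (Fin k → X) =>
      ∑ c ∈ S, (List.ofFn fun j => ι R (c j)).prod := by
  classical
  intro S S' h
  ext i
  have hcoeff := congrArg
    (fun x => (equivMonoidAlgebraFreeMonoid x).coeff (FreeMonoid.ofList (List.ofFn i))) h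
  simp only [coeff_equivMonoidAlgebraFreeMonoid_sum_prod_ofFn] at hcoeff
  split_ifs at hcoeff <;> simp_all

theorem lift_ι_comp_sum_prod_ofFn {k : ℕ} (σ : X ≃ Y) (S : Finset (Fin k → X)) :
    lift R (ι R ∘ σ) (∑ c ∈ S, (List.ofFn fun j => ι R (c j)).prod) =
      ∑ c ∈ S.map (Equiv.piCongrRight fun _ => σ).toEmbedding,
        (List.ofFn fun j => ι R (c j)).prod := by
  simp [map_list_prod, List.map_ofFn, Function.comp_def]

end FreeAlgebra

open FreeAlgebra

theorem lift_ι_comp_perm_powerSum (N j : ℕ) (σ : Equiv.Perm (Fin N)) :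
    lift ℂ (ι ℂ ∘ σ) (powerSum N j) = powerSum N j := by
  simp only [powerSum, map_sum, map_pow, lift_ι_apply, Function.comp_apply]
  exact Equiv.sum_comp σ fun i => ι ℂ i ^ j

theorem lift_ι_comp_swap_elemSym_ne {N k : ℕ} (hk : 2 ≤ k) (hkN : k ≤ N) :
    lift ℂ (ι ℂ ∘ Equiv.swap (⟨0, by omega⟩ : Fin N) ⟨1, by omega⟩) (elemSym N k) ≠
      elemSym N k := by
  intro h
  rw [elemSym, lift_ι_comp_sum_prod_ofFn] at h
  have hinc : Fin.castLE hkN ∈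
      Finset.univ.filter fun i : Fin k → Fin N => ∀ a b : Fin k, a < b → i a < i b := by
    simp
  rw [← sum_prod_ofFn_ι_injective h, Finset.mem_map_equiv, Finset.mem_filter] at hinc
  have h01 := hinc.2 ⟨0, by omega⟩ ⟨1, by omega⟩ Nat.zero_lt_one
  simp [Fin.castLE_mk, Fin.lt_def] at h01

/-- For `2 ≤ k ≤ N`, the elementary symmetric polynomial `e_k` does not lie in the
subalgebra of `ℂ⟨x_1,…,x_N⟩` generated by the power sums `{p_j : j ≥ 1}`. -/
theorem stmt2 (N k : ℕ) (hk : 2 ≤ k) (hkN : k ≤ N) :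
    elemSym N k ∉
      Algebra.adjoin ℂ {y : FreeAlgebra ℂ (Fin N) | ∃ j : ℕ, 1 ≤ j ∧ y = powerSum N j} := by
  intro hmem
  have hfix : elemSym N k ∈ AlgHom.equalizer
      (lift ℂ (ι ℂ ∘ Equiv.swap (⟨0, by omega⟩ : Fin N) ⟨1, by omega⟩)) (AlgHom.id ℂ _) :=
    Algebra.adjoin_le (by rintro _ ⟨j, -, rfl⟩; exact lift_ι_comp_perm_powerSum N j _) hmem
  exact lift_ι_comp_swap_elemSym_ne hk hkN hfix
end

section
/- Let R be a (not necessarily commutative) ring, x_1,…,x_N ∈ R, and let u = (u_1,…,u_r) be a nonempty finite sequence of positive integers. Then the ordered product p_{u_1} p_{u_2} ⋯ p_{u_r} equals ∑_{c} P_{u·c}, where the sum ranges over all compositions c of r. -/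
open scoped BigOperators

/-- The power sum `p_k = ∑_{i=1}^N x_i^k` of elements `x_1, …, x_N` of a ring. -/
def pSum {R : Type*} [Ring R] {N : ℕ} (x : Fin N → R) (k : ℕ) : R :=
  ∑ i : Fin N, x i ^ k

/-- For a finite sequence `v = (v_1, …, v_s)` of exponents,
`P_v = ∑ x_{i(1)}^{v_1} ⋯ x_{i(s)}^{v_s}`, the sum over all `i : Fin s → Fin N`
with neighboring indices distinct. -/
def PPoly {R : Type*} [Ring R] {N : ℕ} (x : Fin N → R) {s : ℕ} (v : Fin s → ℕ) : R :=
  ∑ i ∈ Finset.univ.filter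
      (fun i : Fin s → Fin N => ∀ j k : Fin s, (k : ℕ) = (j : ℕ) + 1 → i j ≠ i k),
    (List.ofFn fun j : Fin s => x (i j) ^ v j).prod

/-- For a composition `c` of `r`, the sequence `u·c` of length `c.length` whose `j`-th
entry is the sum of the entries of `u` over the `j`-th consecutive block of `c`. -/
def blockSum {r : ℕ} (u : Fin r → ℕ) (c : Composition r) : Fin c.length → ℕ :=
  fun j => ∑ t : Fin (c.blocksFun j), u (c.embedding j t)

/-!
Expanding the product gives a sum over all index sequences `i : Fin r → Fin N`. Cutting such a
sequence into maximal runs of equal indices yields a composition `c` of `r` together with an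
index sequence with distinct neighbours, whose term is a term of `P_{u·c}`. This bijection is
realised by induction on `r`: a composition of `r + 1` either starts with a block of size one
or enlarges the first block of a composition of `r`, according as the first index differs from
the second or not.
-/

open Finset

namespace Composition

variable {n : ℕ}

def consOne (c : Composition n) : Composition (n + 1) where
  blocks := 1 :: c.blocks
  blocks_pos := by
    rintro i (_ | ⟨_, hi⟩)
    exacts [one_pos, c.blocks_pos hi]
  blocks_sum := by rw [List.sum_cons, c.blocks_sum, add_comm]

def succHead (c : Composition (n + 1)) : Composition (n + 2) where
  blocks := c.blocks.modifyHead (· + 1)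
  blocks_pos := by
    obtain ⟨_ | ⟨b, t⟩, hpos, -⟩ := c
    · simp
    · rintro i (_ | ⟨_, hi⟩)
      exacts [Nat.succ_pos b, hpos (List.mem_cons_of_mem b hi)]
  blocks_sum := by
    obtain ⟨_ | ⟨b, t⟩, -, hsum⟩ := c
    · simp at hsum
    · simp only [List.modifyHead_cons, List.sum_cons] at hsum ⊢
      omega

theorem consOne_injective : Function.Injective (consOne : Composition n → _) :=
  fun _ _ h => Composition.ext (List.cons_injective (congrArg blocks h))

theorem succHead_injective : Function.Injective (succHead : Composition (n + 1) → _) := by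
  intro c c' h
  have h' := congrArg (fun c => c.blocks.modifyHead (· - 1)) h
  rw [succHead, succHead, List.modifyHead_modifyHead, List.modifyHead_modifyHead,
    show ((· - 1) ∘ (· + 1) : ℕ → ℕ) = id from funext fun k => Nat.add_sub_cancel k 1,
    List.modifyHead_id] at h'
  exact Composition.ext h'

theorem consOne_ne_succHead (c c' : Composition (n + 1)) :
    c.consOne ≠ c'.succHead := by
  intro h
  have h' := congrArg (fun c => c.blocks.head?) h
  obtain ⟨_ | ⟨b, t⟩, hpos, hs⟩ := c'
  · simp at hs
  · have := hpos List.mem_cons_self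
    simp [consOne, succHead] at h'
    omega

theorem eq_consOne_or_eq_succHead (c : Composition (n + 2)) :
    (∃ c', c = consOne c') ∨ ∃ c', c = succHead c' := by
  obtain ⟨_ | ⟨_ | _ | b, t⟩, hpos, hsum⟩ := c
  · simp at hsum
  · exact absurd (hpos List.mem_cons_self) (lt_irrefl 0)
  · refine .inl ⟨⟨t, fun hi => hpos (List.mem_cons_of_mem _ hi), ?_⟩, rfl⟩
    simp only [List.sum_cons] at hsum; omega
  · refine .inr ⟨⟨(b + 1) :: t, ?_, ?_⟩, rfl⟩
    · rintro i (_ | ⟨_, hi⟩)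
      exacts [Nat.succ_pos b, hpos (List.mem_cons_of_mem _ hi)]
    · simp only [List.sum_cons] at hsum ⊢; omega

theorem sum_eq_sum_consOne_add_sum_succHead {M : Type*} [AddCommMonoid M]
    (f : Composition (n + 2) → M) :
    ∑ c, f c =
      ∑ c : Composition (n + 1), f c.consOne + ∑ c : Composition (n + 1), f c.succHead := by
  have hbij : Function.Bijective (Sum.elim consOne succHead : _ → Composition (n + 2)) := by
    refine ⟨consOne_injective.sumElim succHead_injective consOne_ne_succHead, fun c => ?_⟩
    obtain ⟨c', rfl⟩ | ⟨c', rfl⟩ := eq_consOne_or_eq_succHead c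
    exacts [⟨.inl c', rfl⟩, ⟨.inr c', rfl⟩]
  rw [← (Equiv.ofBijective _ hbij).sum_comp, Fintype.sum_sum_type]
  rfl

theorem sum_of_le_one {M : Type*} [AddCommMonoid M] (hn : n ≤ 1) (f : Composition n → M) :
    ∑ c, f c = f (ones n) := by
  refine Fintype.sum_eq_single _ fun c hc => absurd (eq_ones_iff_le_length.2 ?_) hc
  rcases n.eq_zero_or_pos with rfl | hpos
  · exact Nat.zero_le _
  · exact hn.trans (c.length_pos_of_pos hpos)

end Composition

namespace List

def blockSums {n : ℕ} (v : List ℕ) (c : Composition n) : List ℕ :=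
  (v.splitWrtComposition c).map sum

theorem blockSums_consOne {n : ℕ} (k : ℕ) (v : List ℕ) (c : Composition n) :
    (k :: v).blockSums c.consOne = k :: v.blockSums c := by
  simp [blockSums, splitWrtComposition, Composition.consOne, splitWrtCompositionAux_cons]

theorem blockSums_succHead {n : ℕ} (k : ℕ) (v : List ℕ) (c : Composition (n + 1)) :
    (k :: v).blockSums c.succHead = (v.blockSums c).modifyHead (k + ·) := by
  obtain ⟨_ | ⟨b, t⟩, -, hsum⟩ := c
  · simp at hsum
  · simp [blockSums, splitWrtComposition, Composition.succHead, splitWrtCompositionAux_cons]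

theorem blockSums_ne_nil {n : ℕ} (v : List ℕ) (c : Composition (n + 1)) :
    v.blockSums c ≠ [] := by
  rw [← length_pos_iff, blockSums, length_map, length_splitWrtComposition]
  exact c.length_pos_of_pos n.succ_pos

theorem ofFn_blockSum {r : ℕ} (u : Fin r → ℕ) (c : Composition r) :
    ofFn (blockSum u c) = (ofFn u).blockSums c := by
  refine ext_getElem (by simp [blockSums]) fun j h _ => ?_
  rw [length_ofFn] at h
  simp only [List.getElem_ofFn, blockSums, getElem_map, getElem_splitWrtComposition]
  have hblock : ((ofFn u).take (c.sizeUpTo (j + 1))).drop (c.sizeUpTo j) =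
      ofFn fun t => u (c.embedding ⟨j, h⟩ t) := by
    refine ext_getElem ?_ fun t _ _ => ?_
    · have : c.sizeUpTo (j + 1) = c.sizeUpTo j + c.blocksFun ⟨j, h⟩ := c.sizeUpTo_succ' ⟨j, h⟩
      have := c.sizeUpTo_le (j + 1)
      simp only [length_drop, length_take, length_ofFn]
      omega
    · simp only [getElem_drop, getElem_take, List.getElem_ofFn]
      exact congrArg u (Fin.ext (by simp [c.coe_embedding]))
  rw [hblock, sum_ofFn]
  rfl

end List

section ChainSum

variable {R : Type*} [Ring R] {N : ℕ} (x : Fin N → R)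

/-- `chainSum x a v` is `P_v` restricted to index sequences whose first index differs from `a`,
the index preceding the sequence, if any. -/
def chainSum : Option (Fin N) → List ℕ → R
  | _, [] => 1
  | a, k :: v => ∑ i with a ≠ some i, x i ^ k * chainSum (some i) v

def chainSumFrom (i : Fin N) : List ℕ → R
  | [] => 0
  | k :: v => x i ^ k * chainSum x (some i) v

theorem sum_isChain_eq_chainSum (a : Option (Fin N)) {s : ℕ} (v : Fin s → ℕ) :
    ∑ i : Fin s → Fin N with (a :: (List.ofFn i).map some).IsChain (· ≠ ·),
      (List.ofFn fun j => x (i j) ^ v j).prod = chainSum x a (List.ofFn v) := by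
  induction s generalizing a with
  | zero => simp [chainSum]
  | succ s ih =>
    rw [List.ofFn_succ, chainSum, sum_filter, ← (Fin.consEquiv fun _ => Fin N).sum_comp,
      Fintype.sum_prod_type]
    simp [← ih, mul_sum, sum_filter, List.ofFn_succ, ite_and]

theorem PPoly_eq_chainSum {s : ℕ} (v : Fin s → ℕ) :
    PPoly x v = chainSum x none (List.ofFn v) := by
  rw [← sum_isChain_eq_chainSum, PPoly]
  refine sum_congr (filter_congr fun i _ => ?_) fun _ _ => rfl
  simp only [List.isChain_cons, List.head?_map, Option.mem_map, List.isChain_map,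
    List.isChain_ofFn, ne_eq, Option.some_inj]
  constructor
  · exact fun h => ⟨by rintro _ ⟨_, -, rfl⟩; simp, fun j hj => h ⟨j, _⟩ ⟨j + 1, hj⟩ rfl⟩
  · rintro ⟨-, h⟩ ⟨j, _⟩ ⟨k, hk⟩ (rfl : k = j + 1)
    exact h j hk

theorem chainSum_eq_sum_chainSumFrom (a : Option (Fin N)) {s : List ℕ} (hs : s ≠ []) :
    chainSum x a s = ∑ i with a ≠ some i, chainSumFrom x i s := by
  obtain ⟨k, v, rfl⟩ := List.exists_cons_of_ne_nil hs
  rfl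

theorem chainSum_some_add_chainSumFrom (i : Fin N) {s : List ℕ} (hs : s ≠ []) :
    chainSum x (some i) s + chainSumFrom x i s = ∑ j, chainSumFrom x j s := by
  rw [chainSum_eq_sum_chainSumFrom x _ hs]
  simp [filter_ne]

theorem chainSumFrom_modifyHead (i : Fin N) (k : ℕ) (s : List ℕ) :
    chainSumFrom x i (s.modifyHead (k + ·)) = x i ^ k * chainSumFrom x i s := by
  cases s with
  | nil => simp [chainSumFrom]
  | cons l s => simp [chainSumFrom, pow_add, mul_assoc]

theorem sum_chainSumFrom_blockSums (i : Fin N) (k : ℕ) (w : List ℕ) :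
    ∑ c : Composition (w.length + 1), chainSumFrom x i ((k :: w).blockSums c) =
      x i ^ k * (w.map (pSum x)).prod := by
  induction w generalizing i k with
  | nil =>
    refine (Composition.sum_of_le_one le_rfl _).trans ?_
    show chainSumFrom x i [k] = _
    simp [chainSumFrom, chainSum]
  | cons l w ih =>
    have hsplit (c : Composition (w.length + 1)) :
        chainSum x (some i) ((l :: w).blockSums c) + chainSumFrom x i ((l :: w).blockSums c) =
          ∑ j, chainSumFrom x j ((l :: w).blockSums c) :=
      chainSum_some_add_chainSumFrom x i (List.blockSums_ne_nil _ c)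
    calc ∑ c : Composition (w.length + 2), chainSumFrom x i ((k :: l :: w).blockSums c)
        = x i ^ k * ∑ c : Composition (w.length + 1),
            ∑ j, chainSumFrom x j ((l :: w).blockSums c) := by
          simp only [Composition.sum_eq_sum_consOne_add_sum_succHead, List.blockSums_consOne,
            List.blockSums_succHead, chainSumFrom_modifyHead, ← hsplit, mul_add, sum_add_distrib,
            mul_sum]
          rfl
      _ = x i ^ k * ((l :: w).map (pSum x)).prod := by
          rw [sum_comm]
          simp only [ih, ← sum_mul]
          rfl

theorem sum_chainSum_blockSums (v : List ℕ) :
    ∑ c : Composition v.length, chainSum x none (v.blockSums c) = (v.map (pSum x)).prod := by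
  cases v with
  | nil => exact (Composition.sum_of_le_one zero_le_one _).trans rfl
  | cons k w =>
    simp only [chainSum_eq_sum_chainSumFrom x none (List.blockSums_ne_nil _ _), reduceCtorEq,
      ne_eq, not_false_eq_true, filter_true]
    rw [sum_comm]
    simp only [List.length_cons, sum_chainSumFrom_blockSums, ← sum_mul]
    rfl

end ChainSum

theorem stmt5_general {R : Type*} [Ring R] {N : ℕ} (x : Fin N → R)
    {r : ℕ} (u : Fin r → ℕ) :
    (List.ofFn fun j : Fin r => pSum x (u j)).prod
      = ∑ c : Composition r, PPoly x (blockSum u c) := by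
  have h := sum_chainSum_blockSums x (List.ofFn u)
  rw [List.length_ofFn, List.map_ofFn] at h
  simp only [PPoly_eq_chainSum, List.ofFn_blockSum, h]
  rfl

/-- For a nonempty sequence `u = (u_1, …, u_r)` of positive integers, the ordered product
`p_{u_1} p_{u_2} ⋯ p_{u_r}` equals `∑_c P_{u·c}`, the sum over all compositions `c` of `r`. -/
theorem stmt5 {R : Type*} [Ring R] {N : ℕ} (hN : 1 ≤ N) (x : Fin N → R)
    {r : ℕ} (hr : 0 < r) (u : Fin r → ℕ) (hu : ∀ j, 1 ≤ u j) :
    (List.ofFn fun j : Fin r => pSum x (u j)).prod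
      = ∑ c : Composition r, PPoly x (blockSum u c) :=
  stmt5_general x u
end
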